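/- Any global minimizer s of m(s) = f₀ + gᵀs + (1/2)γ‖s‖² + (1/3)σ‖s‖³ with g ≠ 0, γ > 0, σ > 0 satisfies the first-order condition g + γs + σ‖s‖s = 0, and every solution of this equation is parallel to -g, i.e., s = -αg for some α > 0. -/

import Mathlib

/-! The model is Fréchet differentiable everywhere, including at the origin where `‖s‖ ^ 3`
vanishes to second order, with derivative `⟪g + γ • s + σ‖s‖ • s, ·⟫`; so a minimizer is a
critical point. A critical point satisfies `(γ + σ‖s‖) • s = -g` with `γ + σ‖s‖ > 0`. -/

open scoped RealInnerProductSpace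

section CubicModel

variable {E : Type*} [NormedAddCommGroup E] [InnerProductSpace ℝ E]

noncomputable def cubicModel (f₀ : ℝ) (g : E) (γ σ : ℝ) (s : E) : ℝ :=
  f₀ + ⟪g, s⟫ + (1 / 2) * γ * ‖s‖ ^ 2 + (1 / 3) * σ * ‖s‖ ^ 3

theorem hasFDerivAt_norm_pow_three (x : E) :
    HasFDerivAt (fun x : E ↦ ‖x‖ ^ 3) ((3 * ‖x‖) • innerSL ℝ x) x := by
  have h := hasFDerivAt_norm_rpow x (p := 3) (by norm_num)
  norm_num at h
  exact_mod_cast h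

theorem hasFDerivAt_cubicModel (f₀ : ℝ) (g : E) (γ σ : ℝ) (s : E) :
    HasFDerivAt (cubicModel f₀ g γ σ) (innerSL ℝ (g + γ • s + (σ * ‖s‖) • s)) s := by
  have h := ((((innerSL ℝ g).hasFDerivAt (x := s)).const_add f₀).add
    ((hasStrictFDerivAt_norm_sq s).hasFDerivAt.const_mul ((1 / 2) * γ))).add
    ((hasFDerivAt_norm_pow_three s).const_mul ((1 / 3) * σ))
  refine h.congr_fderiv ?_
  ext v
  simp only [innerSL_apply_apply, inner_add_left, real_inner_smul_left,
    add_apply, smul_apply, smul_eq_mul, nsmul_eq_mul]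
  ring

theorem IsLocalMin.cubicModel_gradient_eq_zero {f₀ : ℝ} {g : E} {γ σ : ℝ} {s : E}
    (h : IsLocalMin (cubicModel f₀ g γ σ) s) : g + γ • s + (σ * ‖s‖) • s = 0 := by
  have h' := congrArg (fun L ↦ L (g + γ • s + (σ * ‖s‖) • s))
    (h.hasFDerivAt_eq_zero (hasFDerivAt_cubicModel f₀ g γ σ s))
  simpa only [innerSL_apply_apply, zero_apply, inner_self_eq_zero] using h'

theorem exists_pos_smul_eq_neg_of_cubicModel_gradient_eq_zero {g : E} {γ σ : ℝ} {s : E}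
    (hγ : 0 < γ) (hσ : 0 ≤ σ) (h : g + γ • s + (σ * ‖s‖) • s = 0) :
    ∃ α : ℝ, α > 0 ∧ s = -(α • g) := by
  have hc : 0 < γ + σ * ‖s‖ := by positivity
  refine ⟨(γ + σ * ‖s‖)⁻¹, inv_pos.mpr hc, ?_⟩
  rw [add_assoc, ← add_smul, add_eq_zero_iff_neg_eq] at h
  rw [← smul_neg, eq_inv_smul_iff₀ hc.ne', h]

end CubicModel

theorem cubic_model_critical_points_general (n : ℕ) (g : EuclideanSpace ℝ (Fin n))
    (γ σ f₀ : ℝ) (hγ : γ > 0) (hσ : σ > 0)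
    (m : EuclideanSpace ℝ (Fin n) → ℝ)
    (hm : ∀ s, m s = f₀ + ⟪g, s⟫ + (1 / 2) * γ * ‖s‖ ^ 2 + (1 / 3) * σ * ‖s‖ ^ 3) :
    (∀ s, (∀ t, m s ≤ m t) → g + γ • s + (σ * ‖s‖) • s = 0) ∧
    (∀ s, g + γ • s + (σ * ‖s‖) • s = 0 → ∃ α : ℝ, α > 0 ∧ s = -(α • g)) := by
  obtain rfl : m = cubicModel f₀ g γ σ := funext hm
  exact ⟨fun _ hmin ↦ IsLocalMin.cubicModel_gradient_eq_zero (.of_forall hmin),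
    fun _ ↦ exists_pos_smul_eq_neg_of_cubicModel_gradient_eq_zero hγ hσ.le⟩

theorem cubic_model_critical_points (n : ℕ) (g : EuclideanSpace ℝ (Fin n)) (hg : g ≠ 0)
    (γ σ f₀ : ℝ) (hγ : γ > 0) (hσ : σ > 0)
    (m : EuclideanSpace ℝ (Fin n) → ℝ)
    (hm : ∀ s, m s = f₀ + ⟪g, s⟫ + (1 / 2) * γ * ‖s‖ ^ 2 + (1 / 3) * σ * ‖s‖ ^ 3) :
    (∀ s, (∀ t, m s ≤ m t) → g + γ • s + (σ * ‖s‖) • s = 0) ∧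
    (∀ s, g + γ • s + (σ * ‖s‖) • s = 0 → ∃ α : ℝ, α > 0 ∧ s = -(α • g)) :=
  cubic_model_critical_points_general n g γ σ f₀ hγ hσ m hm
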